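/- arXiv:2006.09422 — 5 statements merged into one kernel-verified Lean document; each statement's English description precedes it below -/
import Mathlib

section
/- Let H be a graph with e(H) edges and let k ≥ 2 be an integer. Suppose there exist graphons W₁,…,W_k with W₁+⋯+W_k = 1 and t(H,W₁)+⋯+t(H,W_k) < k^{-e(H)+1}. Then for every integer ℓ > k there exist graphons W′₁,…,W′_ℓ with W′₁+⋯+W′_ℓ = 1 and t(H,W′₁)+⋯+t(H,W′_ℓ) < ℓ^{-e(H)+1}. (Take W′_i = (k/ℓ)W_i for i ≤ k and W′_i = 1/ℓ otherwise.) That is, if H is not k-common then H is not ℓ-common for any ℓ ≥ k. -/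
open MeasureTheory

noncomputable section

/-- The Lebesgue measure restricted to `[0,1]`. -/
abbrev muI : Measure ℝ := volume.restrict (Set.Icc 0 1)

/-- A graphon: a symmetric measurable function `[0,1]² → [0,1]`
(represented as a function on `ℝ²`). -/
def IsGraphon (W : ℝ → ℝ → ℝ) : Prop :=
  Measurable (Function.uncurry W) ∧ (∀ x y, W x y = W y x) ∧
    (∀ x y, W x y ∈ Set.Icc (0:ℝ) 1)

/-- The edges of a graph on `Fin m`, each listed once as an ordered pair. -/
def edgeFinset' {m : ℕ} (G : SimpleGraph (Fin m)) [DecidableRel G.Adj] :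
    Finset (Fin m × Fin m) :=
  Finset.univ.filter fun p => p.1 < p.2 ∧ G.Adj p.1 p.2

/-- The number of edges of `G`. -/
def edgeCount {m : ℕ} (G : SimpleGraph (Fin m)) [DecidableRel G.Adj] : ℕ :=
  (edgeFinset' G).card

/-- The homomorphism density `t(G, W)`. -/
def homDensity {m : ℕ} (G : SimpleGraph (Fin m)) [DecidableRel G.Adj]
    (W : ℝ → ℝ → ℝ) : ℝ :=
  ∫ x : Fin m → ℝ, ∏ p ∈ edgeFinset' G, W (x p.1) (x p.2)
    ∂(Measure.pi fun _ => muI)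

/-- The single-edge graph `K₂`. -/
abbrev K2 : SimpleGraph (Fin 2) := ⊤

/-- The complete bipartite graph `K_{a,b}` on `Fin (a+b)`. -/
def bip (a b : ℕ) : SimpleGraph (Fin (a + b)) where
  Adj i j := (decide (i.val < a)) ≠ (decide (j.val < a))
  symm := ⟨fun _ _ h => h.symm⟩
  loopless := ⟨fun _ h => h rfl⟩

instance (a b : ℕ) : DecidableRel (bip a b).Adj :=
  fun i j => inferInstanceAs (Decidable (_ ≠ _))

/-- The cycle `C_n` on `Fin n` (for `n ≥ 3`). -/
def cyc (n : ℕ) : SimpleGraph (Fin n) where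
  Adj i j := i ≠ j ∧ ((i.val + 1) % n = j.val ∨ (j.val + 1) % n = i.val)
  symm := ⟨fun _ _ h => ⟨h.1.symm, h.2.symm⟩⟩
  loopless := ⟨fun _ h => h.1 rfl⟩

instance (n : ℕ) : DecidableRel (cyc n).Adj :=
  fun i j => inferInstanceAs (Decidable (_ ∧ _))

/-! Pad a `k`-colouring with `l - k` colour classes: scale the old classes by `k / l` and let each
new class be the constant `1 / l`. A class `c W` contributes `c ^ e(H) t(H, W)` and a constant
`1 / l` contributes `l ^ (-e(H))`, so the total is `(k / l) ^ e(H) ∑ t(H, Wᵢ) + (l - k) l ^ (-e(H))`,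
which lies below `l ^ (1 - e(H))` exactly when `∑ t(H, Wᵢ) < k ^ (1 - e(H))`. -/

instance : IsProbabilityMeasure muI :=
  ⟨by rw [Measure.restrict_apply_univ]; simp [Real.volume_Icc]⟩

lemma IsGraphon.const_mul {W : ℝ → ℝ → ℝ} (hW : IsGraphon W) {c : ℝ}
    (hc : c ∈ Set.Icc (0 : ℝ) 1) : IsGraphon fun x y => c * W x y :=
  ⟨measurable_const.mul hW.1, fun x y => congrArg (c * ·) (hW.2.1 x y),
    fun x y => ⟨mul_nonneg hc.1 (hW.2.2 x y).1, mul_le_one₀ hc.2 (hW.2.2 x y).1 (hW.2.2 x y).2⟩⟩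

lemma isGraphon_const {c : ℝ} (hc : c ∈ Set.Icc (0 : ℝ) 1) : IsGraphon fun _ _ => c :=
  ⟨measurable_const, fun _ _ => rfl, fun _ _ => hc⟩

lemma homDensity_const_mul {m : ℕ} (G : SimpleGraph (Fin m)) [DecidableRel G.Adj]
    (c : ℝ) (W : ℝ → ℝ → ℝ) :
    homDensity G (fun x y => c * W x y) = c ^ edgeCount G * homDensity G W := by
  unfold homDensity edgeCount
  simp_rw [Finset.prod_mul_distrib, Finset.prod_const]
  exact integral_const_mul _ _

lemma homDensity_const {m : ℕ} (G : SimpleGraph (Fin m)) [DecidableRel G.Adj] (c : ℝ) :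
    homDensity G (fun _ _ => c) = c ^ edgeCount G := by
  simp [homDensity, edgeCount, Finset.prod_const]

def padColoring {k : ℕ} (W : Fin k → ℝ → ℝ → ℝ) (n : ℕ) : Fin (k + n) → ℝ → ℝ → ℝ :=
  Fin.append (fun i x y => (k / (k + n : ℕ) : ℝ) * W i x y) fun _ _ _ => 1 / (k + n : ℕ)

section padColoring

variable {k : ℕ} {W : Fin k → ℝ → ℝ → ℝ} (n : ℕ)

lemma isGraphon_padColoring (hW : ∀ i, IsGraphon (W i)) (i : Fin (k + n)) :
    IsGraphon (padColoring W n i) := by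
  have hL : (0 : ℝ) ≤ (k + n : ℕ) := Nat.cast_nonneg _
  induction i using Fin.addCases with
  | left i =>
    rw [padColoring, Fin.append_left]
    refine (hW i).const_mul ⟨by positivity, div_le_one_of_le₀ ?_ hL⟩
    exact_mod_cast Nat.le_add_right k n
  | right i =>
    rw [padColoring, Fin.append_right]
    refine isGraphon_const ⟨by positivity, div_le_one_of_le₀ ?_ hL⟩
    exact_mod_cast (Nat.one_le_of_lt i.isLt).trans (Nat.le_add_left n k)

lemma sum_padColoring (hk : k ≠ 0) {x y : ℝ} (hsum : ∑ i, W i x y = 1) :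
    ∑ i, padColoring W n i x y = 1 := by
  have hL : ((k + n : ℕ) : ℝ) ≠ 0 := by positivity
  simp only [padColoring, Fin.sum_univ_add, Fin.append_left, Fin.append_right, ← Finset.mul_sum,
    hsum, Finset.sum_const, Finset.card_univ, Fintype.card_fin, nsmul_eq_mul]
  field_simp
  push_cast
  ring

lemma sum_homDensity_padColoring {m : ℕ} (H : SimpleGraph (Fin m)) [DecidableRel H.Adj] :
    ∑ i, homDensity H (padColoring W n i) =
      (k / (k + n : ℕ) : ℝ) ^ edgeCount H * ∑ i, homDensity H (W i) +
        n * (1 / (k + n : ℕ) : ℝ) ^ edgeCount H := by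
  simp only [padColoring, Fin.sum_univ_add, Fin.append_left, Fin.append_right,
    homDensity_const_mul, homDensity_const, ← Finset.mul_sum, Finset.sum_const, Finset.card_univ,
    Fintype.card_fin, nsmul_eq_mul]

end padColoring

/-- Multiplying through by `(k + n) ^ e`, the inequality becomes `k ^ e S + n < k + n`. -/
lemma padded_sum_lt {k n S : ℝ} (hk : 0 < k) (hn : 0 ≤ n) (e : ℕ) (hS : S < k ^ (1 - (e : ℤ))) :
    (k / (k + n)) ^ e * S + n * (1 / (k + n)) ^ e < (k + n) ^ (1 - (e : ℤ)) := by
  have hkn : 0 < k + n := by positivity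
  rw [zpow_sub₀ hk.ne', zpow_one, zpow_natCast, lt_div_iff₀ (by positivity)] at hS
  rw [zpow_sub₀ hkn.ne', zpow_one, zpow_natCast, div_pow, one_div_pow, lt_div_iff₀ (by positivity)]
  field_simp
  linarith

theorem not_kCommon_mono_general {m : ℕ} (H : SimpleGraph (Fin m)) [DecidableRel H.Adj]
    (k : ℕ) (W : Fin k → ℝ → ℝ → ℝ)
    (hW : ∀ i, IsGraphon (W i)) (hsum : ∀ x y, ∑ i, W i x y = 1)
    (hlt : ∑ i, homDensity H (W i) < (k : ℝ) ^ (1 - (edgeCount H : ℤ)))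
    (l : ℕ) (hl : k < l) :
    ∃ W' : Fin l → ℝ → ℝ → ℝ, (∀ i, IsGraphon (W' i)) ∧
      (∀ x y, ∑ i, W' i x y = 1) ∧
      ∑ i, homDensity H (W' i) < (l : ℝ) ^ (1 - (edgeCount H : ℤ)) := by
  have hk : k ≠ 0 := by
    rintro rfl
    simpa using hsum 0 0
  obtain ⟨n, rfl⟩ := Nat.exists_eq_add_of_le hl.le
  refine ⟨padColoring W n, isGraphon_padColoring n hW,
    fun x y => sum_padColoring n hk (hsum x y), ?_⟩
  rw [sum_homDensity_padColoring]
  push_cast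
  exact padded_sum_lt (by positivity) n.cast_nonneg _ hlt

/-- If H is not k-common, then H is not ℓ-common for any ℓ > k. -/
theorem not_kCommon_mono {m : ℕ} (H : SimpleGraph (Fin m)) [DecidableRel H.Adj]
    (k : ℕ) (hk : 2 ≤ k) (W : Fin k → ℝ → ℝ → ℝ)
    (hW : ∀ i, IsGraphon (W i)) (hsum : ∀ x y, ∑ i, W i x y = 1)
    (hlt : ∑ i, homDensity H (W i) < (k : ℝ) ^ (1 - (edgeCount H : ℤ)))
    (l : ℕ) (hl : k < l) :
    ∃ W' : Fin l → ℝ → ℝ → ℝ, (∀ i, IsGraphon (W' i)) ∧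
      (∀ x y, ∑ i, W' i x y = 1) ∧
      ∑ i, homDensity H (W' i) < (l : ℝ) ^ (1 - (edgeCount H : ℤ)) :=
  not_kCommon_mono_general H k W hW hsum hlt l hl
end
end

section
/- Let H be a graph, U ⊆ V(H) an independent set in H, and n a positive integer. Let Hⁿ be the graph obtained by taking n disjoint copies of H and identifying the corresponding vertices of U (so Hⁿ has n|H| − (n−1)|U| vertices). Then for every graphon W, t(Hⁿ,W) ≥ t(H,W)ⁿ. -/
open MeasureTheory

noncomputable section

/-!
Splitting the coordinates of `[0,1]^{V(H)}` into those in `U` and the rest, Fubini gives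
`t(H,W) = ∫ t_W^H(x_U) dx_U`. In `Hⁿ` the `n` copies of `V(H) ∖ U` are disjoint and, `U` being
independent, every edge lies in exactly one copy; so for fixed `x_U` the copies are integrated
independently and `t_W^{Hⁿ}(x_U) = t_W^H(x_U)ⁿ`. Jensen's inequality for `t ↦ tⁿ` on the
probability space `[0,1]^U` then gives `t(Hⁿ,W) = ∫ t_W^H(x_U)ⁿ ≥ (∫ t_W^H(x_U))ⁿ = t(H,W)ⁿ`.
-/

open Finset

namespace MeasureTheory

variable {α : Type*} [MeasurableSpace α] (μ : Measure α)

theorem measurePreserving_curry (ι κ : Type*) [Fintype ι] [Fintype κ] [SigmaFinite μ] :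
    MeasurePreserving (MeasurableEquiv.curry ι κ α) (Measure.pi fun _ => μ)
      (Measure.pi fun _ : ι => Measure.pi fun _ : κ => μ) := by
  refine MeasurePreserving.symm _ ⟨(MeasurableEquiv.curry ι κ α).symm.measurable, ?_⟩
  refine (Measure.pi_eq fun s _ => ?_).symm
  have hpre : (MeasurableEquiv.curry ι κ α).symm ⁻¹' Set.univ.pi s =
      Set.univ.pi fun i => Set.univ.pi fun j => s (i, j) := by
    ext x
    simp [MeasurableEquiv.coe_curry_symm, Prod.forall]
  simp_rw [MeasurableEquiv.map_apply, hpre, Measure.pi_pi, Fintype.prod_prod_type]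

theorem pow_integral_le_integral_pow [IsProbabilityMeasure μ] (n : ℕ) {f : α → ℝ}
    (hf0 : 0 ≤ᵐ[μ] f) (hfi : Integrable f μ) (hfni : Integrable (fun x => f x ^ n) μ) :
    (∫ x, f x ∂μ) ^ n ≤ ∫ x, f x ^ n ∂μ :=
  (convexOn_pow n).map_integral_le (continuous_pow n).continuousOn isClosed_Ici hf0 hfi hfni

theorem integral_mem_Icc_of_mem_Icc [IsProbabilityMeasure μ] {f : α → ℝ}
    (h01 : ∀ x, f x ∈ Set.Icc 0 1) : ∫ x, f x ∂μ ∈ Set.Icc 0 1 := by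
  have hle := norm_integral_le_of_norm_le_const (μ := μ) (C := 1) <| .of_forall fun x => by
    rw [Real.norm_of_nonneg (h01 x).1]; exact (h01 x).2
  rw [probReal_univ, one_mul] at hle
  exact ⟨integral_nonneg fun x => (h01 x).1, (Real.le_norm_self _).trans hle⟩

theorem integral_prod_comp_equiv_eq_integral_pow [IsFiniteMeasure μ]
    {ι S C T : Type*} [Fintype ι] [Fintype S] [Fintype C] [Fintype T]
    (κ : S ⊕ C × T ≃ ι) {g : (S → α) × (T → α) → ℝ} (hg : Measurable g)
    (hg01 : ∀ z, g z ∈ Set.Icc 0 1) :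
    ∫ y, ∏ c, g (fun s => y (κ (.inl s)), fun t => y (κ (.inr (c, t))))
        ∂(Measure.pi fun _ => μ) =
      ∫ u, (∫ t, g (u, t) ∂(Measure.pi fun _ => μ)) ^ Fintype.card C
        ∂(Measure.pi fun _ => μ) := by
  have hint : Integrable (fun y => ∏ c, g (fun s => y (κ (.inl s)), fun t => y (κ (.inr (c, t)))))
      (Measure.pi fun _ => μ) :=
    .of_mem_Icc 0 1 (by fun_prop) <| .of_forall fun y =>
      ⟨prod_nonneg fun c _ => (hg01 _).1,
        prod_le_one (fun c _ => (hg01 _).1) fun c _ => (hg01 _).2⟩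
  have he := (measurePreserving_sumPiEquivProdPi_symm fun _ : S ⊕ C × T => μ).trans
    (measurePreserving_piCongrLeft (fun _ : ι => μ) κ)
  replace hint := (he.integrable_comp_emb (MeasurableEquiv.measurableEmbedding _)).mpr hint
  rw [Function.comp_def] at hint
  rw [← he.integral_comp', integral_prod _ hint]
  refine integral_congr_ae (.of_forall fun u => ?_)
  dsimp only
  rw [← ((measurePreserving_curry μ C T).symm _).integral_comp']
  simp only [MeasurableEquiv.trans_apply, MeasurableEquiv.coe_piCongrLeft,
    Equiv.piCongrLeft_apply_apply]
  exact integral_fintype_prod_eq_pow (ι := C) (μ := Measure.pi fun _ : T => μ) (fun t => g (u, t))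

end MeasureTheory

theorem prod_edgeFinset'_eq_prod_edgeFinset {m : ℕ} (G : SimpleGraph (Fin m))
    [DecidableRel G.Adj] {R : Type*} [CommMonoid R] (f : Fin m → Fin m → R)
    (hf : ∀ a b, f a b = f b a) :
    ∏ p ∈ edgeFinset' G, f p.1 p.2 = ∏ e ∈ G.edgeFinset, Sym2.lift ⟨f, hf⟩ e := by
  refine prod_bij (fun p _ => s(p.1, p.2)) ?_ ?_ ?_ fun p _ => rfl
  · intro p hp
    simp only [edgeFinset', mem_filter, mem_univ, true_and] at hp
    simpa using hp.2
  · rintro ⟨a, b⟩ hab ⟨a', b'⟩ hab' h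
    simp only [edgeFinset', mem_filter, mem_univ, true_and] at hab hab'
    rcases Sym2.eq_iff.mp h with ⟨rfl, rfl⟩ | ⟨rfl, rfl⟩
    · rfl
    · exact absurd (hab.1.trans hab'.1) (lt_irrefl _)
  · intro e he
    induction e using Sym2.ind with | _ a b => ?_
    rw [SimpleGraph.mem_edgeFinset, SimpleGraph.mem_edgeSet] at he
    rcases lt_or_gt_of_ne he.ne with h | h
    · exact ⟨(a, b), by simp [edgeFinset', h, he], rfl⟩
    · exact ⟨(b, a), by simp [edgeFinset', h, he.symm], Sym2.eq_swap⟩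

theorem edgeFinset_eq_image {V V' C : Type*} [Fintype V] [Fintype V'] [Fintype C]
    [DecidableEq V'] {H : SimpleGraph V} [DecidableRel H.Adj] {G : SimpleGraph V'}
    [DecidableRel G.Adj] {φ : C → V → V'}
    (hadj : ∀ a b, G.Adj a b ↔ ∃ c i j, H.Adj i j ∧ a = φ c i ∧ b = φ c j) :
    G.edgeFinset = (univ ×ˢ H.edgeFinset).image fun q => q.2.map (φ q.1) := by
  ext e
  induction e using Sym2.ind with | _ a b => ?_
  simp only [SimpleGraph.mem_edgeFinset, SimpleGraph.mem_edgeSet, hadj, mem_image, mem_product,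
    mem_univ, true_and, Prod.exists]
  constructor
  · rintro ⟨c, i, j, hij, rfl, rfl⟩
    exact ⟨c, s(i, j), hij, rfl⟩
  · rintro ⟨c, e, he, hmap⟩
    induction e using Sym2.ind with | _ i j => ?_
    rcases Sym2.eq_iff.mp hmap with ⟨rfl, rfl⟩ | ⟨rfl, rfl⟩
    · exact ⟨c, i, j, he, rfl, rfl⟩
    · exact ⟨c, j, i, he.symm, rfl, rfl⟩

/-- The vertex maps of copies of a graph on `V` glued along `U`; for `C = Fin n` this is the
vertex set of `Hⁿ`. -/
structure IsGluing {V V' C : Type*} (U : Finset V) (φ : C → V → V') : Prop where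
  injective : ∀ c, Function.Injective (φ c)
  agree : ∀ c c', ∀ i ∈ U, φ c i = φ c' i
  disjoint : ∀ c c', c ≠ c' → ∀ i j, i ∉ U → j ∉ U → φ c i ≠ φ c' j
  surjective : ∀ v, ∃ c i, φ c i = v

namespace IsGluing

variable {V V' C : Type*} {U : Finset V} {φ : C → V → V'}

theorem mem_of_apply_eq_apply (hφ : IsGluing U φ) {c c' : C} (hcc : c ≠ c') {i j : V}
    (h : φ c i = φ c' j) : i ∈ U := by
  by_contra hi
  by_cases hj : j ∈ U
  · rw [← hφ.agree c c' j hj] at h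
    exact hi (hφ.injective c h ▸ hj)
  · exact hφ.disjoint c c' hcc i j hi hj h

def vertexEquiv (hφ : IsGluing U φ) (c₀ : C) : {i // i ∈ U} ⊕ C × {i // i ∉ U} ≃ V' :=
  Equiv.ofBijective (Sum.elim (fun i => φ c₀ i) fun q => φ q.1 q.2) <| by
    refine ⟨?_, fun v => ?_⟩
    · rintro (⟨i, hi⟩ | ⟨c, j, hj⟩) (⟨i', hi'⟩ | ⟨c', j', hj'⟩) h <;>
        simp only [Sum.elim_inl, Sum.elim_inr] at h
      · exact congrArg _ (Subtype.ext (hφ.injective c₀ h))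
      · rw [hφ.agree c₀ c' i hi] at h
        exact absurd (hφ.injective c' h ▸ hi) hj'
      · rw [hφ.agree c₀ c i' hi'] at h
        exact absurd (hφ.injective c h ▸ hi') hj
      · obtain rfl : c = c' := by_contra fun hcc => hj (hφ.mem_of_apply_eq_apply hcc h)
        obtain rfl := hφ.injective c h
        rfl
    · obtain ⟨c, i, rfl⟩ := hφ.surjective v
      by_cases hi : i ∈ U
      · exact ⟨.inl ⟨i, hi⟩, hφ.agree c₀ c i hi⟩
      · exact ⟨.inr (c, ⟨i, hi⟩), rfl⟩

@[simp]
theorem vertexEquiv_inl (hφ : IsGluing U φ) (c₀ : C) (i : {i // i ∈ U}) :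
    hφ.vertexEquiv c₀ (.inl i) = φ c₀ i := rfl

@[simp]
theorem vertexEquiv_inr (hφ : IsGluing U φ) (c₀ : C) (q : C × {i // i ∉ U}) :
    hφ.vertexEquiv c₀ (.inr q) = φ q.1 q.2 := rfl

theorem comp_eq_piEquivPiSubtypeProd_symm [DecidableEq V] (hφ : IsGluing U φ) (c₀ c : C)
    {α : Type*} (y : V' → α) :
    y ∘ φ c = (Equiv.piEquivPiSubtypeProd (· ∈ U) _).symm
      (fun s => y (hφ.vertexEquiv c₀ (.inl s)), fun t => y (hφ.vertexEquiv c₀ (.inr (c, t)))) := by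
  ext i
  by_cases hi : i ∈ U
  · simp [hi, hφ.agree c₀ c i hi]
  · simp [hi]

theorem injOn_map_edgeSet (hφ : IsGluing U φ) {H : SimpleGraph V}
    (hU : ∀ i ∈ U, ∀ j ∈ U, ¬ H.Adj i j) :
    Set.InjOn (fun q : C × Sym2 V => q.2.map (φ q.1)) {q | q.2 ∈ H.edgeSet} := by
  rintro ⟨c, e⟩ he ⟨c', e'⟩ - h
  simp only at h
  obtain rfl : c = c' := by
    by_contra hcc
    induction e using Sym2.ind with | _ i j => ?_
    have hU' : ∀ k ∈ s(i, j), k ∈ U := fun k hk => by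
      have hk' : φ c k ∈ e'.map (φ c') := h ▸ Sym2.mem_map.mpr ⟨k, hk, rfl⟩
      obtain ⟨l, -, hl⟩ := Sym2.mem_map.mp hk'
      exact hφ.mem_of_apply_eq_apply hcc hl.symm
    exact hU i (hU' i (Sym2.mem_mk_left i j)) j (hU' j (Sym2.mem_mk_right i j)) he
  rw [Sym2.map.injective (hφ.injective c) h]

end IsGluing

theorem IsGluing.prod_edgeFinset'_eq_prod {m M : ℕ} {C : Type*} [Fintype C]
    {H : SimpleGraph (Fin m)} [DecidableRel H.Adj] {G : SimpleGraph (Fin M)} [DecidableRel G.Adj]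
    {U : Finset (Fin m)} {φ : C → Fin m → Fin M} (hφ : IsGluing U φ)
    (hU : ∀ i ∈ U, ∀ j ∈ U, ¬ H.Adj i j)
    (hadj : ∀ a b, G.Adj a b ↔ ∃ c i j, H.Adj i j ∧ a = φ c i ∧ b = φ c j)
    {R : Type*} [CommMonoid R] (w : Fin M → Fin M → R) (hw : ∀ a b, w a b = w b a) :
    ∏ p ∈ edgeFinset' G, w p.1 p.2 = ∏ c, ∏ p ∈ edgeFinset' H, w (φ c p.1) (φ c p.2) := by
  rw [prod_edgeFinset'_eq_prod_edgeFinset G w hw, edgeFinset_eq_image hadj,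
    prod_image ((hφ.injOn_map_edgeSet hU).mono fun q hq => by simpa using hq), prod_product]
  refine prod_congr rfl fun c _ => ?_
  rw [prod_edgeFinset'_eq_prod_edgeFinset H (fun a b => w (φ c a) (φ c b)) fun a b => hw _ _]
  refine prod_congr rfl fun e _ => ?_
  induction e using Sym2.ind
  rfl

theorem isGluing_unit {V : Type*} (U : Finset V) : IsGluing U fun _ : Unit => (id : V → V) :=
  ⟨fun _ => Function.injective_id, fun _ _ _ _ => rfl, fun _ _ h => absurd rfl h,
    fun v => ⟨(), v, rfl⟩⟩

instance inst_s2 : IsProbabilityMeasure muI := ⟨by simp [Real.volume_Icc]⟩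

/-- The paper's `t_W^H(x_U)`, with `u = x_U`. -/
def rootedDensity {m : ℕ} (H : SimpleGraph (Fin m)) [DecidableRel H.Adj] (U : Finset (Fin m))
    (W : ℝ → ℝ → ℝ) (u : {i // i ∈ U} → ℝ) : ℝ :=
  ∫ t, ∏ p ∈ edgeFinset' H, W ((Equiv.piEquivPiSubtypeProd (· ∈ U) fun _ => ℝ).symm (u, t) p.1)
    ((Equiv.piEquivPiSubtypeProd (· ∈ U) fun _ => ℝ).symm (u, t) p.2) ∂(Measure.pi fun _ => muI)

theorem IsGraphon.prod_edgeFinset'_mem_Icc {W : ℝ → ℝ → ℝ} (hW : IsGraphon W) {m : ℕ}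
    (H : SimpleGraph (Fin m)) [DecidableRel H.Adj] (x : Fin m → ℝ) :
    ∏ p ∈ edgeFinset' H, W (x p.1) (x p.2) ∈ Set.Icc 0 1 :=
  ⟨prod_nonneg fun _ _ => (hW.2.2 _ _).1,
    prod_le_one (fun _ _ => (hW.2.2 _ _).1) fun _ _ => (hW.2.2 _ _).2⟩

theorem IsGraphon.rootedDensity_mem_Icc {W : ℝ → ℝ → ℝ} (hW : IsGraphon W) {m : ℕ}
    (H : SimpleGraph (Fin m)) [DecidableRel H.Adj] (U : Finset (Fin m)) (u : {i // i ∈ U} → ℝ) :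
    rootedDensity H U W u ∈ Set.Icc 0 1 :=
  integral_mem_Icc_of_mem_Icc _ fun _ => hW.prod_edgeFinset'_mem_Icc H _

theorem IsGraphon.measurable_rootedDensity {W : ℝ → ℝ → ℝ} (hW : IsGraphon W) {m : ℕ}
    (H : SimpleGraph (Fin m)) [DecidableRel H.Adj] (U : Finset (Fin m)) :
    Measurable (rootedDensity H U W) := by
  have hWm := hW.1
  let e := Equiv.piEquivPiSubtypeProd (· ∈ U) fun _ : Fin m => ℝ
  exact (by fun_prop : Measurable fun z => ∏ p ∈ edgeFinset' H, W (e.symm z p.1) (e.symm z p.2))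
    |>.stronglyMeasurable.integral_prod_right'.measurable

theorem IsGluing.homDensity_eq_integral_rootedDensity_pow {m M : ℕ} {C : Type*} [Fintype C]
    {H : SimpleGraph (Fin m)} [DecidableRel H.Adj] {G : SimpleGraph (Fin M)} [DecidableRel G.Adj]
    {U : Finset (Fin m)} {φ : C → Fin m → Fin M} (hφ : IsGluing U φ) (c₀ : C)
    (hU : ∀ i ∈ U, ∀ j ∈ U, ¬ H.Adj i j)
    (hadj : ∀ a b, G.Adj a b ↔ ∃ c i j, H.Adj i j ∧ a = φ c i ∧ b = φ c j)
    {W : ℝ → ℝ → ℝ} (hW : IsGraphon W) :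
    homDensity G W = ∫ u, rootedDensity H U W u ^ Fintype.card C ∂(Measure.pi fun _ => muI) := by
  have hWm := hW.1
  let e := Equiv.piEquivPiSubtypeProd (· ∈ U) fun _ : Fin m => ℝ
  simp only [homDensity, rootedDensity]
  rw [← integral_prod_comp_equiv_eq_integral_pow muI (hφ.vertexEquiv c₀)
    (g := fun z => ∏ p ∈ edgeFinset' H, W (e.symm z p.1) (e.symm z p.2)) (by fun_prop)
    fun z => hW.prod_edgeFinset'_mem_Icc H _]
  congr 1 with y
  rw [hφ.prod_edgeFinset'_eq_prod hU hadj (fun a b => W (y a) (y b)) fun a b => hW.2.1 _ _]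
  refine prod_congr rfl fun c _ => ?_
  rw [← hφ.comp_eq_piEquivPiSubtypeProd_symm c₀ c y]
  rfl

/-- reflecting a graph `H` along an independent set `U`, i.e. taking
`n` copies of `H` glued along `U` (the graph `G` below, described axiomatically
by the gluing maps `φ`), satisfies `t(Hⁿ,W) ≥ t(H,W)ⁿ`. -/
theorem reflection_density {m M : ℕ} (H : SimpleGraph (Fin m)) [DecidableRel H.Adj]
    (G : SimpleGraph (Fin M)) [DecidableRel G.Adj]
    (U : Finset (Fin m)) (hUind : ∀ i ∈ U, ∀ j ∈ U, ¬ H.Adj i j)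
    (n : ℕ) (hn : 1 ≤ n)
    (φ : Fin n → Fin m → Fin M)
    (hinj : ∀ c, Function.Injective (φ c))
    (hagree : ∀ c c' : Fin n, ∀ i ∈ U, φ c i = φ c' i)
    (hdisj : ∀ c c' : Fin n, c ≠ c' → ∀ i j : Fin m, i ∉ U → j ∉ U → φ c i ≠ φ c' j)
    (hcover : ∀ v : Fin M, ∃ c i, φ c i = v)
    (hadj : ∀ a b : Fin M, G.Adj a b ↔
      ∃ c : Fin n, ∃ i j : Fin m, H.Adj i j ∧ a = φ c i ∧ b = φ c j)
    (W : ℝ → ℝ → ℝ) (hW : IsGraphon W) :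
    homDensity H W ^ n ≤ homDensity G W := by
  -- `H` is the one-copy gluing of itself along `U`.
  have hH := (isGluing_unit U).homDensity_eq_integral_rootedDensity_pow () hUind
    (fun a b => ⟨fun h => ⟨(), a, b, h, rfl, rfl⟩, by rintro ⟨-, i, j, h, rfl, rfl⟩; exact h⟩) hW
  have hG := IsGluing.homDensity_eq_integral_rootedDensity_pow ⟨hinj, hagree, hdisj, hcover⟩
    ⟨0, hn⟩ hUind hadj hW
  simp only [Fintype.card_unit, pow_one] at hH
  rw [Fintype.card_fin] at hG
  have h01 := hW.rootedDensity_mem_Icc H U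
  have hm := (hW.measurable_rootedDensity H U).aemeasurable (μ := Measure.pi fun _ => muI)
  rw [hH, hG]
  exact pow_integral_le_integral_pow _ n (.of_forall fun u => (h01 u).1)
    (.of_mem_Icc 0 1 hm (.of_forall h01)) (.of_mem_Icc 0 1 (hm.pow_const n)
      (.of_forall fun u => ⟨pow_nonneg (h01 u).1 n, pow_le_one₀ (h01 u).1 (h01 u).2⟩))

end
end

section
/- Let ℓ ≥ 3 be odd and let A₁,…,A_{2ℓ} be a partition of [0,1] into measurable sets each of measure 1/(2ℓ). Define the kernel U by U(x,y) = +1 if x∈A_i, y∈A_j with ⌈i/ℓ⌉ = ⌈j/ℓ⌉ and i ≡ j±1 (mod ℓ); U(x,y) = −1 if x∈A_i, y∈A_j with ⌈i/ℓ⌉ ≠ ⌈j/ℓ⌉ and i ≡ j±1 (mod ℓ); and U(x,y)=0 otherwise. Then t(C_ℓ, U) = 2/ℓ^{ℓ−1}. -/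
/-! Split a part index `i : Fin (2ℓ)` into its residue `i mod ℓ` and its block (`i < ℓ` or not).
On the cells, `U` is the adjacency of `C_ℓ` on residues twisted by a sign `ε(i) ε(j)` that
depends only on the blocks, and around a closed walk these signs cancel. Hence
`t(C_ℓ, U) = (2ℓ)^{-ℓ} · 2^ℓ · #{closed walks of length ℓ in C_ℓ}`. A closed walk of odd
length `ℓ` with steps `±1` in `ℤ/ℓ` must step in one direction only, since its number of
`+1` steps `T` satisfies `2T ≡ 0 (mod ℓ)`; so there are exactly `2ℓ` such walks. -/

open MeasureTheory

noncomputable section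

open Finset

theorem Fin.sum_comp_modNat {ι M : Type*} [Fintype ι] [DecidableEq ι] [AddCommMonoid M]
    {m n : ℕ} (F : (ι → Fin n) → M) :
    ∑ σ : ι → Fin (m * n), F (fun i => (σ i).modNat) = (m ^ Fintype.card ι) • ∑ r, F r := by
  let e : (ι → Fin (m * n)) ≃ (ι → Fin m) × (ι → Fin n) :=
    (Equiv.arrowCongr (Equiv.refl ι) finProdFinEquiv.symm).trans
      (Equiv.arrowProdEquivProdArrow _ _ _)
  rw [Fintype.sum_equiv e (fun σ => F fun i => (σ i).modNat) (fun p => F p.2) fun _ => rfl,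
    Fintype.sum_prod_type]
  simp

namespace Fin

variable {n : ℕ} [NeZero n]

theorem val_add_one_mod_eq (i : Fin n) : (i.val + 1) % n = (i + 1).val := by
  simp [Fin.val_add, Nat.add_mod_mod]

theorem add_one_ne_self (hn : 2 ≤ n) (i : Fin n) : i + 1 ≠ i := by
  rw [Ne, add_eq_left, Fin.ext_iff, Fin.val_one', Nat.mod_eq_of_lt hn]
  simp

theorem prod_mul_apply_add_one {M : Type*} [CommMonoid M] (f : Fin n → M) :
    ∏ i, f i * f (i + 1) = (∏ i, f i) ^ 2 := by
  rw [prod_mul_distrib, Fintype.prod_equiv (Equiv.addRight 1) (fun i => f (i + 1)) f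
    fun _ => rfl, sq]

section CommRing

open Fin.CommRing

theorem neg_one_ne_one_of_three_le (hn : 3 ≤ n) : (-1 : Fin n) ≠ 1 := by
  intro h
  have h2 : ((2 : ℕ) : Fin n) = 0 := by push_cast; linear_combination -h
  have := Nat.le_of_dvd two_pos (Fin.natCast_eq_zero.1 h2)
  omega

theorem add_one_add_one_ne_self (hn : 3 ≤ n) (i : Fin n) : i + 1 + 1 ≠ i := by
  rw [Ne, add_assoc, add_eq_left]
  exact fun h => neg_one_ne_one_of_three_le hn (neg_eq_of_add_eq_zero_left h)

theorem forall_eq_one_or_forall_eq_neg_one (hn : 3 ≤ n) (hodd : Odd n) {d : Fin n → Fin n}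
    (hd : ∀ i, d i = 1 ∨ d i = -1) (hsum : ∑ i, d i = 0) :
    (∀ i, d i = 1) ∨ (∀ i, d i = -1) := by
  set T : Finset (Fin n) := {i | d i = 1}
  have hshift : ∑ i, (d i + 1) = ((2 * #T : ℕ) : Fin n) := by
    rw [Nat.cast_mul, Nat.cast_ofNat, card_eq_sum_ones, Nat.cast_sum, sum_filter, mul_sum]
    refine sum_congr rfl fun i _ => ?_
    rcases hd i with h | h
    · rw [h, if_pos rfl, Nat.cast_one, mul_one, one_add_one_eq_two]
    · simp [h, neg_one_ne_one_of_three_le hn]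
  have hdvd : n ∣ #T := by
    rw [sum_add_distrib, hsum, sum_const, nsmul_one, Fin.natCast_self, add_zero, eq_comm,
      Fin.natCast_eq_zero] at hshift
    exact hodd.coprime_two_right.dvd_of_dvd_mul_left hshift
  rcases Nat.eq_zero_or_pos #T with h0 | hpos
  · right
    intro i
    refine (hd i).resolve_left fun h => ?_
    simp only [T, card_eq_zero, filter_eq_empty_iff] at h0
    exact h0 (mem_univ i) h
  · left
    have hT : T = univ := eq_univ_of_card T
      (le_antisymm (card_le_univ T) (by simpa using Nat.le_of_dvd hpos hdvd))
    intro i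
    have hi : i ∈ T := hT ▸ mem_univ i
    simpa [T] using hi

theorem eq_add_mul_of_forall_apply_add_one {r : Fin n → Fin n} {c : Fin n}
    (hr : ∀ i, r (i + 1) = r i + c) (i : Fin n) : r i = r 0 + i * c := by
  have key : ∀ k : ℕ, r (k : Fin n) = r 0 + k * c := by
    intro k
    induction k with
    | zero => simp
    | succ k ih => rw [Nat.cast_succ, hr, ih]; ring
  simpa using key i

theorem card_filter_forall_apply_add_one (c : Fin n) :
    #{r : Fin n → Fin n | ∀ i, r (i + 1) = r i + c} = n := by
  have himage : ({r : Fin n → Fin n | ∀ i, r (i + 1) = r i + c} : Finset _)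
      = univ.image fun a : Fin n => fun i => a + i * c := by
    ext r
    simp only [mem_filter, mem_univ, true_and, mem_image]
    constructor
    · exact fun hr => ⟨r 0, funext fun i => (eq_add_mul_of_forall_apply_add_one hr i).symm⟩
    · rintro ⟨a, rfl⟩ i
      ring
  rw [himage, card_image_of_injective _ fun a b h => by simpa using congrFun h 0]
  simp

theorem forall_apply_add_one_or_forall_apply_sub_one (hn : 3 ≤ n) (hodd : Odd n)
    {r : Fin n → Fin n} (hr : ∀ i, r (i + 1) = r i + 1 ∨ r (i + 1) = r i - 1) :
    (∀ i, r (i + 1) = r i + 1) ∨ (∀ i, r (i + 1) = r i - 1) := by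
  have htel : ∑ i, (r (i + 1) - r i) = 0 := by
    rw [sum_sub_distrib, Fintype.sum_equiv (Equiv.addRight 1) (fun i => r (i + 1)) r
      fun _ => rfl, sub_self]
  have hsteps : ∀ i, r (i + 1) - r i = 1 ∨ r (i + 1) - r i = -1 := fun i => by
    rcases hr i with h | h <;> simp [h]
  rcases forall_eq_one_or_forall_eq_neg_one hn hodd hsteps htel with h | h
  · exact Or.inl fun i => sub_eq_iff_eq_add'.1 (h i)
  · exact Or.inr fun i => by rw [sub_eq_add_neg]; exact sub_eq_iff_eq_add'.1 (h i)

theorem card_filter_forall_apply_add_one_or_sub_one (hn : 3 ≤ n) (hodd : Odd n) :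
    #{r : Fin n → Fin n | ∀ i, r (i + 1) = r i + 1 ∨ r (i + 1) = r i - 1} = 2 * n := by
  rw [filter_congr fun r _ => ⟨forall_apply_add_one_or_forall_apply_sub_one hn hodd,
    fun h i => h.elim (fun h => Or.inl (h i)) (fun h => Or.inr (h i))⟩, filter_or,
    card_union_of_disjoint, card_filter_forall_apply_add_one]
  · simp_rw [sub_eq_add_neg]
    rw [card_filter_forall_apply_add_one, two_mul]
  · refine disjoint_filter.2 fun r _ hplus hminus => neg_one_ne_one_of_three_le hn ?_
    have h := (hminus 0).symm.trans (hplus 0)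
    rwa [sub_eq_add_neg, add_right_inj] at h

end CommRing

end Fin

section Cycle

variable {n : ℕ} [NeZero n]

theorem cyc_adj_iff (hn : 2 ≤ n) {i j : Fin n} :
    (cyc n).Adj i j ↔ i + 1 = j ∨ j + 1 = i := by
  simp only [cyc, Fin.val_add_one_mod_eq, ← Fin.ext_iff, and_iff_right_iff_imp]
  rintro (rfl | rfl)
  · exact (Fin.add_one_ne_self hn i).symm
  · exact Fin.add_one_ne_self hn j

theorem card_filter_forall_cyc_adj (hn : 3 ≤ n) (hodd : Odd n) :
    #{r : Fin n → Fin n | ∀ i, (cyc n).Adj (r i) (r (i + 1))} = 2 * n := by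
  have hsteps (r : Fin n → Fin n) : (∀ i, (cyc n).Adj (r i) (r (i + 1))) ↔
      ∀ i, r (i + 1) = r i + 1 ∨ r (i + 1) = r i - 1 :=
    forall_congr' fun i => by rw [cyc_adj_iff (by omega), eq_comm, eq_sub_iff_add_eq]
  rw [filter_congr fun r _ => hsteps r]
  exact Fin.card_filter_forall_apply_add_one_or_sub_one hn hodd

theorem prod_edgeFinset'_cyc {M : Type*} [CommMonoid M] (hn : 3 ≤ n) {g : Fin n → Fin n → M}
    (hg : ∀ i j, g i j = g j i) :
    ∏ p ∈ edgeFinset' (cyc n), g p.1 p.2 = ∏ i, g i (i + 1) := by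
  have hne := Fin.add_one_ne_self (by omega : 2 ≤ n)
  have hne₂ := Fin.add_one_add_one_ne_self hn
  symm
  -- `i ↦` the edge `{i, i + 1}` in increasing order; back: the endpoint followed by the other one
  refine prod_nbij' (fun i => if i < i + 1 then (i, i + 1) else (i + 1, i))
    (fun p => if p.1 + 1 = p.2 then p.1 else p.2) ?_ (fun _ _ => mem_univ _) ?_ ?_ ?_
  · intro i _
    simp only [edgeFinset', mem_filter, mem_univ, true_and, cyc_adj_iff (by omega : 2 ≤ n)]
    split_ifs with h
    · exact ⟨h, Or.inl rfl⟩
    · exact ⟨lt_of_le_of_ne (not_lt.1 h) (hne i), Or.inr rfl⟩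
  · intro i _
    by_cases h : i < i + 1 <;> simp [h, hne₂]
  · intro p hp
    simp only [edgeFinset', mem_filter, mem_univ, true_and, cyc_adj_iff (by omega : 2 ≤ n)] at hp
    obtain ⟨hlt, h | h⟩ := hp
    · simp [h, hlt]
    · have h₁ : ¬ p.1 + 1 = p.2 := fun h' => hne₂ p.2 (by rw [h, h'])
      have h₂ : ¬ p.2 < p.2 + 1 := by rw [h]; exact not_lt.2 hlt.le
      rw [if_neg h₁, if_neg h₂, h]
  · intro i _
    split_ifs
    · rfl
    · exact hg _ _

end Cycle

theorem homDensity_eq_sum_of_const_on_parts {ι : Type*} [Fintype ι] {m : ℕ}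
    (G : SimpleGraph (Fin m)) [DecidableRel G.Adj] {A : ι → Set ℝ}
    (hmeas : ∀ i, MeasurableSet (A i))
    (hdisj : Pairwise (Function.onFun Disjoint A)) (hcover : ⋃ i, A i = Set.Icc 0 1)
    {w : ι → ι → ℝ} {U : ℝ → ℝ → ℝ} (hU : ∀ i j, ∀ x ∈ A i, ∀ y ∈ A j, U x y = w i j) :
    homDensity G U = ∑ σ : Fin m → ι,
      (∏ v, volume.real (A (σ v))) * ∏ p ∈ edgeFinset' G, w (σ p.1) (σ p.2) := by
  set box : (Fin m → ι) → Set (Fin m → ℝ) := fun σ => Set.univ.pi fun v => A (σ v)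
  have hbox (σ : Fin m → ι) : MeasurableSet (box σ) := MeasurableSet.univ_pi fun v => hmeas (σ v)
  have hae : (fun x : Fin m → ℝ => ∏ p ∈ edgeFinset' G, U (x p.1) (x p.2))
      =ᵐ[Measure.pi fun _ => muI] fun x => ∑ σ : Fin m → ι, (box σ).indicator
        (fun _ => ∏ p ∈ edgeFinset' G, w (σ p.1) (σ p.2)) x := by
    have hmem : ∀ᵐ x ∂(Measure.pi fun _ : Fin m => muI), ∀ v, x v ∈ ⋃ i, A i := by
      rw [hcover, ae_all_iff]
      exact fun v => Measure.tendsto_eval_ae_ae.eventually (ae_restrict_mem measurableSet_Icc)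
    filter_upwards [hmem] with x hx
    choose σ₀ hσ₀ using fun v => Set.mem_iUnion.1 (hx v)
    rw [sum_eq_single σ₀, Set.indicator_of_mem (Set.mem_univ_pi.2 hσ₀)]
    · exact prod_congr rfl fun p _ => hU _ _ _ (hσ₀ p.1) _ (hσ₀ p.2)
    · intro σ _ hne
      obtain ⟨v, hv⟩ := Function.ne_iff.1 hne
      exact Set.indicator_of_notMem (fun hx => Set.disjoint_left.1 (hdisj hv)
        (Set.mem_univ_pi.1 hx v) (hσ₀ v)) _
    · exact fun h => absurd (mem_univ σ₀) h
  rw [homDensity, integral_congr_ae hae,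
    integral_finsetSum _ fun σ _ => (integrable_const _).indicator (hbox σ)]
  refine sum_congr rfl fun σ _ => ?_
  rw [integral_indicator_const _ (hbox σ), smul_eq_mul, measureReal_def, Measure.pi_pi,
    ENNReal.toReal_prod]
  congr 1
  refine prod_congr rfl fun v _ => ?_
  rw [← measureReal_def, measureReal_restrict_apply (hmeas _),
    Set.inter_eq_left.2 (hcover ▸ Set.subset_iUnion A (σ v))]

def signedBlowupWeight (l : ℕ) (i j : Fin (2 * l)) : ℝ :=
  if (i.val % l + 1) % l = j.val % l ∨ (j.val % l + 1) % l = i.val % l then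
    (if (i.val < l ↔ j.val < l) then (1:ℝ) else -1)
  else 0

def blockSign (l : ℕ) (i : Fin (2 * l)) : ℝ := if i.val < l then 1 else -1

theorem blockSign_sq {l : ℕ} (i : Fin (2 * l)) : blockSign l i ^ 2 = 1 := by
  unfold blockSign
  split_ifs <;> norm_num

section SignedBlowup

variable {l : ℕ} [NeZero l]

theorem signedBlowupWeight_eq (hl : 2 ≤ l) (i j : Fin (2 * l)) :
    signedBlowupWeight l i j
      = (if (cyc l).Adj i.modNat j.modNat then 1 else 0) * (blockSign l i * blockSign l j) := by
  have hadj : (cyc l).Adj i.modNat j.modNat ↔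
      (i.val % l + 1) % l = j.val % l ∨ (j.val % l + 1) % l = i.val % l := by
    rw [cyc_adj_iff hl, Fin.ext_iff, Fin.ext_iff, ← Fin.val_add_one_mod_eq,
      ← Fin.val_add_one_mod_eq, Fin.coe_modNat, Fin.coe_modNat]
  rw [signedBlowupWeight, blockSign, blockSign]
  by_cases h : (cyc l).Adj i.modNat j.modNat
  · rw [if_pos h, if_pos (hadj.1 h), one_mul]
    split_ifs <;> simp_all
  · rw [if_neg h, if_neg (mt hadj.2 h), zero_mul]

theorem signedBlowupWeight_comm (hl : 2 ≤ l) (i j : Fin (2 * l)) :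
    signedBlowupWeight l i j = signedBlowupWeight l j i := by
  rw [signedBlowupWeight_eq hl, signedBlowupWeight_eq hl, mul_comm (blockSign l i)]
  exact congrArg (· * _) (if_congr ((cyc l).adj_comm _ _) rfl rfl)

theorem sum_prod_signedBlowupWeight (hl : 3 ≤ l) (hodd : Odd l) :
    ∑ σ : Fin l → Fin (2 * l), ∏ i, signedBlowupWeight l (σ i) (σ (i + 1))
      = 2 ^ l * (2 * l) := by
  have hprod (σ : Fin l → Fin (2 * l)) : ∏ i, signedBlowupWeight l (σ i) (σ (i + 1)) =
      if ∀ i, (cyc l).Adj (σ i).modNat (σ (i + 1)).modNat then 1 else 0 := by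
    have hsign : ∏ i, blockSign l (σ i) * blockSign l (σ (i + 1)) = 1 := by
      rw [Fin.prod_mul_apply_add_one, ← prod_pow]
      exact prod_eq_one fun i _ => blockSign_sq _
    simp only [signedBlowupWeight_eq (by omega : 2 ≤ l)]
    rw [prod_mul_distrib, hsign, mul_one, prod_ite_zero]
    simp
  simp only [hprod]
  rw [Fin.sum_comp_modNat
      (fun r : Fin l → Fin l => if ∀ i, (cyc l).Adj (r i) (r (i + 1)) then (1 : ℝ) else 0),
    sum_boole, card_filter_forall_cyc_adj hl hodd]
  simp

end SignedBlowup

/-- The parts are 0-indexed, so `⌈i/ℓ⌉ = ⌈j/ℓ⌉` becomes `i < ℓ ↔ j < ℓ`. -/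
theorem cycle_density_of_kernel (l : ℕ) (hl3 : 3 ≤ l) (hodd : Odd l)
    (A : Fin (2 * l) → Set ℝ) (hmeas : ∀ i, MeasurableSet (A i))
    (hdisj : Pairwise (Function.onFun Disjoint A))
    (hcover : (⋃ i, A i) = Set.Icc (0:ℝ) 1)
    (hsize : ∀ i, volume (A i) = ENNReal.ofReal (1 / (2 * l)))
    (U : ℝ → ℝ → ℝ)
    (hU : ∀ i j : Fin (2 * l), ∀ x ∈ A i, ∀ y ∈ A j,
      U x y =
        if (i.val % l + 1) % l = j.val % l ∨ (j.val % l + 1) % l = i.val % l then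
          (if (i.val < l ↔ j.val < l) then (1:ℝ) else -1)
        else 0) :
    homDensity (cyc l) U = 2 / (l : ℝ) ^ (l - 1) := by
  have : NeZero l := ⟨by omega⟩
  have hpart (i : Fin (2 * l)) : volume.real (A i) = 1 / (2 * l) := by
    rw [measureReal_def, hsize, ENNReal.toReal_ofReal (by positivity)]
  rw [homDensity_eq_sum_of_const_on_parts (cyc l) hmeas hdisj hcover
    (w := signedBlowupWeight l) hU]
  have hcycle (σ : Fin l → Fin (2 * l)) :
      ∏ p ∈ edgeFinset' (cyc l), signedBlowupWeight l (σ p.1) (σ p.2)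
        = ∏ i, signedBlowupWeight l (σ i) (σ (i + 1)) :=
    prod_edgeFinset'_cyc hl3 fun i j => signedBlowupWeight_comm (by omega) (σ i) (σ j)
  simp only [hpart, hcycle, prod_const, card_univ, Fintype.card_fin]
  rw [← mul_sum, sum_prod_signedBlowupWeight hl3 hodd]
  have hpow : (l : ℝ) ^ l = l ^ (l - 1) * l := by rw [← pow_succ, Nat.sub_add_cancel (by omega)]
  have hl0 : (l : ℝ) ≠ 0 := by positivity
  rw [div_pow, one_pow, mul_pow, hpow]
  field_simp

end
end

section
/- Let H be a non-bipartite graph with c connected components, |H| vertices and e(H) edges, and let k ≥ 2, d = 2e(H)/|H|. If 2^{−(k−1)(|H|−c)} < k^{−e(H)+1}, then H is not k-common. In particular, if H is connected and non-bipartite with average degree d, then κ(H) ≤ ⌈2d log₂ d⌉, where κ(H) is the least k for which H is not k-common. -/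
/-!
Cut `[0,1]` into `2^(k-1)` intervals of equal length, indexed by `Fin (k-1) → Bool`. Colour a pair
of distinct intervals by the first coordinate where their indices differ, and a pair inside one
interval by the last colour. Each of the first `k-1` colour classes is bipartite (split by that
coordinate), so a non-bipartite `H` only has monochromatic copies in the last colour, i.e. maps
that are constant on every component of `H`; hence the densities sum to `2^(-(k-1)(|H|-c))`.
For connected `H` and `k ≥ 2d log₂ d`, the required `(e(H)-1) log k < (k-1)(|H|-1) log 2`
follows from `(d+1) log k ≤ 2 (k-1) log 2` and `d + 1 ≤ |H|`.
-/

open MeasureTheory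

noncomputable section

/-- `H` is not `k`-common (graphon formulation). -/
def NotKCommon {m : ℕ} (H : SimpleGraph (Fin m)) [DecidableRel H.Adj]
    (k : ℕ) : Prop :=
  ∃ W : Fin k → ℝ → ℝ → ℝ, (∀ i, IsGraphon (W i)) ∧
    (∀ x y, ∑ i, W i x y = 1) ∧
    ∑ i, homDensity H (W i) < (k : ℝ) ^ (1 - (edgeCount H : ℤ))

section Equidistribution

def unitIntervalPart (N : ℕ) (x : ℝ) : ℕ := min (N - 1) ⌊x * N⌋₊

lemma measurable_unitIntervalPart (N : ℕ) : Measurable (unitIntervalPart N) :=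
  (measurable_of_countable (min (N - 1))).comp (Nat.measurable_floor.comp (measurable_mul_const _))

lemma muI_preimage_unitIntervalPart {N j : ℕ} (hj : j < N) :
    muI (unitIntervalPart N ⁻¹' {j}) = ENNReal.ofReal (N : ℝ)⁻¹ := by
  have hN : (0 : ℝ) < N := by exact_mod_cast j.zero_le.trans_lt hj
  have hjN : (j : ℝ) + 1 ≤ N := by exact_mod_cast hj
  have hlen : ((j : ℝ) + 1) / N - j / N = (N : ℝ)⁻¹ := by field_simp; ring
  rw [Measure.restrict_apply (measurable_unitIntervalPart N (measurableSet_singleton j))]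
  apply le_antisymm
  · calc _ ≤ volume (Set.Icc ((j : ℝ) / N) ((j + 1) / N)) := measure_mono ?_
      _ = _ := by rw [Real.volume_Icc, hlen]
    rintro x ⟨hx, hx0, hx1⟩
    simp only [Set.mem_preimage, Set.mem_singleton_iff, unitIntervalPart] at hx
    have hxN : 0 ≤ x * N := by positivity
    rw [Set.mem_Icc, div_le_iff₀ hN, le_div_iff₀ hN]
    refine ⟨(Nat.cast_le.mpr (by omega : j ≤ ⌊x * N⌋₊)).trans (Nat.floor_le hxN), ?_⟩
    rcases (by omega : ⌊x * N⌋₊ = j ∨ j + 1 = N) with hfl | hjN'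
    · exact (hfl ▸ Nat.lt_floor_add_one (x * N)).le
    · rw [← Nat.cast_add_one, hjN']; nlinarith
  · calc _ = volume (Set.Ico ((j : ℝ) / N) ((j + 1) / N)) := by rw [Real.volume_Ico, hlen]
      _ ≤ _ := measure_mono ?_
    rintro x ⟨hjx, hxj⟩
    rw [div_le_iff₀ hN] at hjx
    rw [lt_div_iff₀ hN] at hxj
    have hx0 : 0 ≤ x := nonneg_of_mul_nonneg_left ((Nat.cast_nonneg j).trans hjx) hN
    have hfl : ⌊x * N⌋₊ = j := (Nat.floor_eq_iff (by positivity)).mpr ⟨hjx, hxj⟩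
    refine ⟨?_, hx0, ?_⟩
    · simp only [Set.mem_preimage, Set.mem_singleton_iff, unitIntervalPart, hfl]; omega
    · nlinarith

lemma exists_measurable_equidistributed (α : Type*) [Fintype α] [Nonempty α] [MeasurableSpace α]
    [MeasurableSingletonClass α] :
    ∃ π : ℝ → α, Measurable π ∧
      ∀ a, muI (π ⁻¹' {a}) = ENNReal.ofReal (Fintype.card α : ℝ)⁻¹ := by
  set N := Fintype.card α
  let e := Fintype.equivFin α
  have hpart : ∀ x, unitIntervalPart N x < N := fun x => by
    have := Fintype.card_pos (α := α); unfold unitIntervalPart; omega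
  let π : ℝ → α := fun x => e.symm ⟨unitIntervalPart N x, hpart x⟩
  have hpre : ∀ a, π ⁻¹' {a} = unitIntervalPart N ⁻¹' {(e a : ℕ)} := fun a => by
    ext x; simp [π, Equiv.symm_apply_eq, Fin.ext_iff]
  refine ⟨π, measurable_to_countable' fun a => ?_, fun a => ?_⟩
  · rw [hpre]; exact measurable_unitIntervalPart N (measurableSet_singleton _)
  · rw [hpre]; exact muI_preimage_unitIntervalPart (e a).isLt

variable {α : Type*} [Fintype α] [MeasurableSpace α] [MeasurableSingletonClass α]

lemma homDensity_comp_of_equidistributed {π : ℝ → α} (hπ : Measurable π)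
    (hunif : ∀ a, muI (π ⁻¹' {a}) = ENNReal.ofReal (Fintype.card α : ℝ)⁻¹)
    {m : ℕ} (H : SimpleGraph (Fin m)) [DecidableRel H.Adj] (f : α → α → ℝ) :
    homDensity H (fun x y => f (π x) (π y)) =
      (Fintype.card α : ℝ)⁻¹ ^ m *
        ∑ q : Fin m → α, ∏ p ∈ edgeFinset' H, f (q p.1) (q p.2) := by
  set ν : Measure α := muI.map π
  have hν : ∀ a, ν {a} = ENNReal.ofReal (Fintype.card α : ℝ)⁻¹ := fun a => by
    rw [Measure.map_apply hπ (measurableSet_singleton a), hunif]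
  have hpi (q : Fin m → α) :
      (Measure.pi fun _ => ν).real {q} = (Fintype.card α : ℝ)⁻¹ ^ m := by
    rw [measureReal_def, ← Set.univ_pi_singleton q, Measure.pi_pi]
    simp [hν]
  have hmp : MeasurePreserving (fun (x : Fin m → ℝ) j => π (x j))
      (Measure.pi fun _ => muI) (Measure.pi fun _ => ν) :=
    measurePreserving_pi _ _ fun _ => ⟨hπ, rfl⟩
  let F : (Fin m → α) → ℝ := fun q => ∏ p ∈ edgeFinset' H, f (q p.1) (q p.2)
  calc homDensity H (fun x y => f (π x) (π y))
      = ∫ q, F q ∂(Measure.pi fun _ => muI).map fun x j => π (x j) :=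
        (integral_map hmp.aemeasurable (measurable_of_countable F).aestronglyMeasurable).symm
    _ = _ := by
      rw [hmp.map_eq, integral_fintype .of_finite, Finset.mul_sum]
      simp only [hpi, smul_eq_mul, F]

end Equidistribution

namespace SimpleGraph

variable {V α : Type*} (G : SimpleGraph V)

lemma Reachable.apply_eq_of_forall_adj {G : SimpleGraph V} {f : V → α}
    (hf : ∀ u v, G.Adj u v → f u = f v) {u v : V} (huv : G.Reachable u v) : f u = f v := by
  obtain ⟨p⟩ := huv
  induction p with
  | nil => rfl
  | cons h _ ih => exact (hf _ _ h).trans ih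

def adjInvariantEquiv :
    {f : V → α // ∀ u v, G.Adj u v → f u = f v} ≃ (G.ConnectedComponent → α) where
  toFun f := Quot.lift f.1 fun _ _ => Reachable.apply_eq_of_forall_adj f.2
  invFun g := ⟨g ∘ G.connectedComponentMk, fun _ _ h =>
    congrArg g (ConnectedComponent.connectedComponentMk_eq_of_adj h)⟩
  left_inv _ := rfl
  right_inv g := by ext c; induction c using ConnectedComponent.ind; rfl

lemma natCard_adjInvariant [Finite V] :
    Nat.card {f : V → α // ∀ u v, G.Adj u v → f u = f v} =
      Nat.card α ^ Nat.card G.ConnectedComponent := by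
  have : Finite G.ConnectedComponent := Finite.of_surjective _ Quot.mk_surjective
  rw [Nat.card_congr G.adjInvariantEquiv, Nat.card_fun]

lemma natCard_connectedComponent_le [Finite V] : Nat.card G.ConnectedComponent ≤ Nat.card V :=
  Nat.card_le_card_of_surjective G.connectedComponentMk Quot.mk_surjective

lemma Connected.natCard_connectedComponent {G : SimpleGraph V} (h : G.Connected) :
    Nat.card G.ConnectedComponent = 1 :=
  have := h.preconnected.subsingleton_connectedComponent
  have : Nonempty G.ConnectedComponent := h.nonempty.map G.connectedComponentMk
  Nat.card_eq_one_iff_unique.mpr ⟨inferInstance, inferInstance⟩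

end SimpleGraph

section EdgeCount

variable {m : ℕ} (H : SimpleGraph (Fin m)) [DecidableRel H.Adj]

lemma forall_mem_edgeFinset'_iff {P : Fin m → Fin m → Prop} (hP : ∀ u v, P u v → P v u) :
    (∀ p ∈ edgeFinset' H, P p.1 p.2) ↔ ∀ u v, H.Adj u v → P u v := by
  refine ⟨fun h u v huv => ?_, fun h p hp => h _ _ (Finset.mem_filter.mp hp).2.2⟩
  rcases lt_or_gt_of_ne huv.ne with hlt | hgt
  · exact h (u, v) (by simp [edgeFinset', hlt, huv])
  · exact hP _ _ (h (v, u) (by simp [edgeFinset', hgt, huv.symm]))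

lemma edgeCount_eq_card_edgeFinset : edgeCount H = H.edgeFinset.card := by
  refine Finset.card_bij (fun p _ => s(p.1, p.2)) (fun p hp => ?_) (fun p hp q hq hpq => ?_)
    (fun e he => ?_)
  · simpa using (Finset.mem_filter.mp hp).2.2
  · have hp := (Finset.mem_filter.mp hp).2.1
    have hq := (Finset.mem_filter.mp hq).2.1
    rcases Sym2.eq_iff.mp hpq with ⟨h1, h2⟩ | ⟨h1, h2⟩
    · exact Prod.ext h1 h2
    · exact absurd (h1 ▸ h2 ▸ hp) hq.asymm
  · induction e using Sym2.ind with
    | _ u v =>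
    have huv : H.Adj u v := by simpa using he
    rcases lt_or_gt_of_ne huv.ne with hlt | hgt
    · exact ⟨(u, v), by simp [edgeFinset', hlt, huv], rfl⟩
    · exact ⟨(v, u), by simp [edgeFinset', hgt, huv.symm], Sym2.eq_swap⟩

lemma two_mul_edgeCount_le : 2 * edgeCount H ≤ m * (m - 1) := by
  have := H.card_edgeFinset_le_card_choose_two
  rw [Fintype.card_fin, Nat.choose_two_right, Nat.le_div_iff_mul_le two_pos,
    ← edgeCount_eq_card_edgeFinset] at this
  omega

lemma le_edgeCount_of_connected (hconn : H.Connected) (hnb : ¬ H.Colorable 2) :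
    m ≤ edgeCount H := by
  have hle := hconn.card_vert_le_card_edgeSet_add_one
  have hne : Nat.card H.edgeSet + 1 ≠ Nat.card (Fin m) := fun h =>
    hnb (SimpleGraph.isTree_iff_connected_and_card.mpr ⟨hconn, h⟩).colorable_two
  simp only [Nat.card_eq_fintype_card, Fintype.card_fin, ← SimpleGraph.edgeFinset_card,
    ← edgeCount_eq_card_edgeFinset] at hle hne
  omega

end EdgeCount

section Colouring

variable {α : Type*} {n : ℕ}

structure IsBipartiteOffDiag (φ : α → α → Fin (n + 1)) : Prop where
  symm : ∀ a b, φ a b = φ b a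
  eq_last_iff : ∀ a b, φ a b = Fin.last n ↔ a = b
  bipartite : ∀ i : Fin n, ∃ β : α → Bool, ∀ a b, φ a b = i.castSucc → β a ≠ β b

variable {φ : α → α → Fin (n + 1)}

lemma IsBipartiteOffDiag.forall_adj_eq_iff {V : Type*} {H : SimpleGraph V}
    (hφ : IsBipartiteOffDiag φ) (hnb : ¬ H.Colorable 2) (q : V → α) (i : Fin (n + 1)) :
    (∀ u v, H.Adj u v → φ (q u) (q v) = i) ↔
      i = Fin.last n ∧ ∀ u v, H.Adj u v → q u = q v := by
  refine ⟨fun h => ?_, fun ⟨hi, h⟩ u v huv => hi ▸ (hφ.eq_last_iff _ _).mpr (h u v huv)⟩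
  induction i using Fin.lastCases with
  | last => exact ⟨rfl, fun u v huv => (hφ.eq_last_iff _ _).mp (h u v huv)⟩
  | cast j =>
    obtain ⟨β, hβ⟩ := hφ.bipartite j
    have hcol : H.Coloring Bool := SimpleGraph.Coloring.mk (β ∘ q) fun huv => hβ _ _ (h _ _ huv)
    exact absurd hcol.colorable (by simpa using hnb)

lemma IsBipartiteOffDiag.sum_sum_prod_eq [Fintype α] {m : ℕ} {H : SimpleGraph (Fin m)}
    [DecidableRel H.Adj] (hφ : IsBipartiteOffDiag φ) (hnb : ¬ H.Colorable 2) :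
    ∑ i, ∑ q : Fin m → α,
        ∏ p ∈ edgeFinset' H, (if φ (q p.1) (q p.2) = i then (1 : ℝ) else 0) =
      (Fintype.card α : ℝ) ^ Nat.card H.ConnectedComponent := by
  classical
  have hq : ∀ q : Fin m → α, ∑ i, ∏ p ∈ edgeFinset' H,
      (if φ (q p.1) (q p.2) = i then (1 : ℝ) else 0) =
        if ∀ u v, H.Adj u v → q u = q v then 1 else 0 := fun q => by
    have hmono : ∀ i, (∀ p ∈ edgeFinset' H, φ (q p.1) (q p.2) = i) ↔
        i = Fin.last n ∧ ∀ u v, H.Adj u v → q u = q v := fun i =>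
      (forall_mem_edgeFinset'_iff H fun u v h => (hφ.symm _ _).trans h).trans
        (hφ.forall_adj_eq_iff hnb q i)
    simp_rw [Finset.prod_boole, hmono, ite_and]
    simp
  rw [Finset.sum_comm, Finset.sum_congr rfl fun q _ => hq q, Finset.sum_boole,
    ← Fintype.card_subtype, ← Nat.card_eq_fintype_card, SimpleGraph.natCard_adjInvariant,
    Nat.card_eq_fintype_card]
  push_cast
  rfl

lemma IsBipartiteOffDiag.notKCommon [Fintype α] [Nonempty α] [MeasurableSpace α]
    [MeasurableSingletonClass α] {m : ℕ} {H : SimpleGraph (Fin m)} [DecidableRel H.Adj]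
    (hφ : IsBipartiteOffDiag φ) (hnb : ¬ H.Colorable 2)
    (hlt : (Fintype.card α : ℝ)⁻¹ ^ m * Fintype.card α ^ Nat.card H.ConnectedComponent <
        ((n + 1 : ℕ) : ℝ) ^ (1 - (edgeCount H : ℤ))) :
    NotKCommon H (n + 1) := by
  obtain ⟨π, hπ, hunif⟩ := exists_measurable_equidistributed α
  let f : Fin (n + 1) → α → α → ℝ := fun i a b => if φ a b = i then 1 else 0
  refine ⟨fun i x y => f i (π x) (π y), fun i => ⟨?_, ?_, ?_⟩, fun x y => ?_, ?_⟩
  · exact (measurable_of_countable (Function.uncurry (f i))).comp (hπ.prodMap hπ)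
  · intro x y
    simp only [f, hφ.symm]
  · intro x y
    simp only [f]
    split_ifs <;> norm_num
  · simp [f]
  · simp_rw [homDensity_comp_of_equidistributed hπ hunif, ← Finset.mul_sum]
    rwa [hφ.sum_sum_prod_eq hnb]

def firstDiffColour (a b : Fin n → Bool) : Fin (n + 1) :=
  if h : (Finset.univ.filter fun i => a i ≠ b i).Nonempty then
    ((Finset.univ.filter fun i => a i ≠ b i).min' h).castSucc
  else Fin.last n

lemma firstDiffColour_comm (a b : Fin n → Bool) :
    firstDiffColour a b = firstDiffColour b a := by
  have : (Finset.univ.filter fun i => a i ≠ b i) = Finset.univ.filter fun i => b i ≠ a i := by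
    simp_rw [ne_comm]
  simp only [firstDiffColour, this]

lemma firstDiffColour_eq_last_iff {a b : Fin n → Bool} :
    firstDiffColour a b = Fin.last n ↔ a = b := by
  unfold firstDiffColour
  split_ifs with h
  · obtain ⟨i, hi⟩ := h
    simp only [Fin.castSucc_ne_last, false_iff]
    rintro rfl
    simp at hi
  · simp only [Finset.not_nonempty_iff_eq_empty, Finset.filter_eq_empty_iff] at h
    simpa using funext fun i => not_not.mp (h (Finset.mem_univ i))

lemma apply_ne_of_firstDiffColour_eq {a b : Fin n → Bool} {i : Fin n}
    (h : firstDiffColour a b = i.castSucc) : a i ≠ b i := by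
  unfold firstDiffColour at h
  split_ifs at h with hne
  · rw [Fin.castSucc_inj] at h
    simpa [h] using Finset.min'_mem _ hne
  · exact absurd h.symm (Fin.castSucc_ne_last i)

lemma isBipartiteOffDiag_firstDiffColour : IsBipartiteOffDiag (firstDiffColour (n := n)) where
  symm := firstDiffColour_comm
  eq_last_iff _ _ := firstDiffColour_eq_last_iff
  bipartite i := ⟨fun a => a i, fun _ _ => apply_ne_of_firstDiffColour_eq⟩

end Colouring

theorem notKCommon_of_two_zpow_lt {m k : ℕ} {H : SimpleGraph (Fin m)} [DecidableRel H.Adj]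
    (hnb : ¬ H.Colorable 2) (hk : 0 < k)
    (hlt : (2 : ℝ) ^ (-(((k - 1) * (m - Nat.card H.ConnectedComponent) : ℕ) : ℤ)) <
      (k : ℝ) ^ (1 - (edgeCount H : ℤ))) :
    NotKCommon H k := by
  obtain ⟨n, rfl⟩ := Nat.exists_eq_add_one_of_ne_zero hk.ne'
  rw [Nat.add_sub_cancel] at hlt
  refine isBipartiteOffDiag_firstDiffColour.notKCommon hnb (hlt.trans_eq' ?_)
  have hc : Nat.card H.ConnectedComponent ≤ m := by
    simpa using H.natCard_connectedComponent_le
  rw [zpow_neg, zpow_natCast, Nat.mul_sub, pow_sub₀ _ two_ne_zero (Nat.mul_le_mul_left n hc)]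
  simp [← pow_mul, mul_comm]

section AverageDegree

open Real

lemma one_le_logb_two {d : ℝ} (hd : 2 ≤ d) : 1 ≤ logb 2 d :=
  (le_logb_iff_rpow_le one_lt_two (by linarith)).mpr (by simpa using hd)

lemma four_le_two_mul_mul_logb {d : ℝ} (hd : 2 ≤ d) : 4 ≤ 2 * d * logb 2 d := by
  nlinarith [one_le_logb_two hd]

lemma add_one_mul_log_le {d x : ℝ} (hd : 2 ≤ d) (hx : 2 * d * logb 2 d ≤ x) :
    (d + 1) * log x ≤ 2 * log 2 * (x - 1) := by
  set ℓ := logb 2 d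
  have hℓ : 1 ≤ ℓ := one_le_logb_two hd
  have hlog2 := log_two_gt_d9
  set t := x / (2 * d * ℓ)
  have hx0 : 0 < 2 * d * ℓ := by positivity
  have ht : 1 ≤ t := (one_le_div hx0).mpr hx
  have hxt : x = 2 * d * ℓ * t := (mul_div_cancel₀ x hx0.ne').symm
  have hlogd : log d = ℓ * log 2 := by simp only [ℓ, logb]; field_simp
  have hlogx : log x ≤ log 2 + ℓ * log 2 + (ℓ - 1) + (t - 1) := by
    rw [hxt, log_mul (by positivity) (by positivity), log_mul (by positivity) (by positivity),
      log_mul (by positivity) (by positivity), hlogd]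
    linarith [log_le_sub_one_of_pos (by positivity : 0 < ℓ),
      log_le_sub_one_of_pos (by positivity : 0 < t)]
  have hℓ_coeff : 0 ≤ (ℓ - 1) * (d * (3 * log 2 - 1) - (log 2 + 1)) :=
    mul_nonneg (by linarith) (by nlinarith)
  have ht_coeff : 0 ≤ (t - 1) * (4 * log 2 * d * ℓ - (d + 1)) :=
    mul_nonneg (by linarith) (by nlinarith)
  have hd_coeff : 0 ≤ log 2 * (d - 2) := mul_nonneg (by linarith) (by linarith)
  calc (d + 1) * log x ≤ (d + 1) * (log 2 + ℓ * log 2 + (ℓ - 1) + (t - 1)) := by gcongr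
    _ ≤ 2 * log 2 * (x - 1) := by rw [hxt]; linarith

lemma two_zpow_lt_zpow_of_two_mul_mul_logb_le {m e k : ℕ} {d : ℝ} (hd : 2 ≤ d)
    (hdm : d + 1 ≤ m) (he : 2 * (e : ℝ) = d * m) (hk : 2 * d * logb 2 d ≤ k) :
    (2 : ℝ) ^ (-(((k - 1) * (m - 1) : ℕ) : ℤ)) < (k : ℝ) ^ (1 - (e : ℤ)) := by
  have hk4 : (4 : ℝ) ≤ k := (four_le_two_mul_mul_logb hd).trans hk
  have hk1 : 1 ≤ k := by exact_mod_cast (show (1 : ℝ) ≤ k by linarith)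
  have hm1 : 1 ≤ m := by exact_mod_cast (show (1 : ℝ) ≤ m by linarith)
  have hlogk : 0 < log k := log_pos (by linarith)
  have hdm_log : d * m * log k ≤ (d + 1) * (m - 1) * log k :=
    mul_le_mul_of_nonneg_right (by nlinarith) hlogk.le
  have hk_log : (m - 1) * ((d + 1) * log k) ≤ (m - 1) * (2 * log 2 * (k - 1)) :=
    mul_le_mul_of_nonneg_left (add_one_mul_log_le hd hk) (by linarith)
  rw [← log_lt_log_iff (by positivity) (by positivity), log_zpow, log_zpow]
  push_cast [Nat.cast_sub hk1, Nat.cast_sub hm1]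
  linarith [congrArg (· * log k) he]

end AverageDegree

theorem not_kCommon_of_nonbipartite_general {m : ℕ} (H : SimpleGraph (Fin m))
    [DecidableRel H.Adj] (hnb : ¬ H.Colorable 2)
    (c : ℕ) (hc : c = Nat.card H.ConnectedComponent) :
    (∀ k : ℕ, 2 ≤ k →
      (2 : ℝ) ^ (-(((k - 1) * (m - c) : ℕ) : ℤ)) <
          (k : ℝ) ^ (1 - (edgeCount H : ℤ)) →
      NotKCommon H k) ∧
    (H.Connected → ∀ d : ℝ, d = 2 * (edgeCount H : ℝ) / m →
      NotKCommon H ⌈2 * d * Real.logb 2 d⌉₊) := by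
  subst hc
  refine ⟨fun k hk hlt => notKCommon_of_two_zpow_lt hnb (by omega) hlt, fun hconn d hd => ?_⟩
  have hm : (0 : ℝ) < m := by exact_mod_cast Fin.pos_iff_nonempty.mpr hconn.nonempty
  have hme : (m : ℝ) ≤ edgeCount H := by exact_mod_cast le_edgeCount_of_connected H hconn hnb
  have hem : 2 * (edgeCount H : ℝ) + m ≤ m * m := by
    have := two_mul_edgeCount_le H
    rw [Nat.mul_sub_one] at this
    exact_mod_cast (by have := Nat.le_mul_self m; omega : 2 * edgeCount H + m ≤ m * m)
  have hd2 : 2 ≤ d := by rw [hd, le_div_iff₀ hm]; linarith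
  have hdm : d + 1 ≤ m := by rw [hd, div_add_one hm.ne', div_le_iff₀ hm]; linarith
  have hk := Nat.le_ceil (2 * d * Real.logb 2 d)
  have hk0 : 0 < ⌈2 * d * Real.logb 2 d⌉₊ := by
    exact_mod_cast (four_le_two_mul_mul_logb hd2).trans hk |>.trans_lt' four_pos
  refine notKCommon_of_two_zpow_lt hnb hk0 ?_
  rw [hconn.natCard_connectedComponent]
  exact two_zpow_lt_zpow_of_two_mul_mul_logb_le hd2 hdm (by rw [hd]; field_simp) hk

/-- for a non-bipartite `H` with `c` components, if
`2^{−(k−1)(|H|−c)} < k^{−e(H)+1}` then `H` is not `k`-common; in particular a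
connected non-bipartite `H` of average degree `d = 2e(H)/|H|` is not
`⌈2d log₂ d⌉`-common, i.e. `κ(H) ≤ ⌈2d log₂ d⌉`. -/
theorem not_kCommon_of_nonbipartite {m : ℕ} (H : SimpleGraph (Fin m))
    [DecidableRel H.Adj] (hm : 0 < m) (hnb : ¬ H.Colorable 2)
    (c : ℕ) (hc : c = Nat.card H.ConnectedComponent) :
    (∀ k : ℕ, 2 ≤ k →
      (2 : ℝ) ^ (-(((k - 1) * (m - c) : ℕ) : ℤ)) <
          (k : ℝ) ^ (1 - (edgeCount H : ℤ)) →
      NotKCommon H k) ∧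
    (H.Connected → ∀ d : ℝ, d = 2 * (edgeCount H : ℝ) / m →
      NotKCommon H ⌈2 * d * Real.logb 2 d⌉₊) :=
  not_kCommon_of_nonbipartite_general H hnb c hc
end
end

section
/- Let λ₁ ≥ p₀ > 0, let π₀ = p₀²/2, let β:[0,1]→ℝ be measurable with ∫ β(x)² dx = λ₁² and λ₁² ≥ 2π₀, and let X₁ = {x : β(x)² ≥ π₀}. Then for every n ≥ 1, ∫_{X₁} β(x)^{2n+2} dx ≥ λ₁^{2n+2}. -/
open MeasureTheory

noncomputable section

/-!
Off `X₁` we have `β² < π₀`, so with `m = |X₁|` the mass of `β²` on `X₁` is at least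
`λ₁² - π₀ (1 - m) ≥ λ₁² (1 + m) / 2`. Jensen's inequality for `t ↦ t ^ (n + 1)` on `X₁`
gives `(∫_{X₁} β²) ^ (n + 1) ≤ mⁿ ∫_{X₁} β^(2n+2)`, and `mⁿ ≤ ((1 + m) / 2) ^ (n + 1)`
on `[0, 1]` absorbs the factor `mⁿ`.
-/

open Set

lemma pow_le_one_add_div_two_pow_succ {m : ℝ} (hm0 : 0 ≤ m) (hm1 : m ≤ 1) {n : ℕ} (hn : 1 ≤ n) :
    m ^ n ≤ ((1 + m) / 2) ^ (n + 1) := by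
  have hsq : m ≤ ((1 + m) / 2) ^ 2 := by nlinarith [sq_nonneg (1 - m)]
  refine le_of_pow_le_pow_left₀ two_ne_zero (by positivity) ?_
  calc (m ^ n) ^ 2 = m ^ (2 * n) := by rw [← pow_mul, mul_comm]
    _ ≤ m ^ (n + 1) := pow_le_pow_of_le_one hm0 hm1 (by omega)
    _ ≤ (((1 + m) / 2) ^ 2) ^ (n + 1) := pow_le_pow_left₀ hm0 hsq _
    _ = (((1 + m) / 2) ^ (n + 1)) ^ 2 := by rw [← pow_mul, ← pow_mul, mul_comm]

lemma pow_succ_le_of_mul_one_add_div_two_le {a m I J : ℝ} {n : ℕ} (hn : 1 ≤ n) (ha : 0 ≤ a)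
    (hm0 : 0 ≤ m) (hm1 : m ≤ 1) (hI : a * ((1 + m) / 2) ≤ I) (hJ : I ^ (n + 1) ≤ m ^ n * J)
    (hJ0 : 0 ≤ J) : a ^ (n + 1) ≤ J := by
  rcases hm0.eq_or_lt with rfl | hm
  · have hI0 : I ^ (n + 1) ≤ 0 := by simpa [zero_pow (by omega : n ≠ 0)] using hJ
    have hpow : (a * ((1 + 0) / 2)) ^ (n + 1) ≤ 0 :=
      (pow_le_pow_left₀ (by positivity) hI _).trans hI0
    rcases ha.eq_or_lt with rfl | ha
    · simpa using hJ0
    · exact absurd hpow (pow_pos (by positivity) _).not_ge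
  refine le_of_mul_le_mul_left ?_ (pow_pos hm n)
  calc m ^ n * a ^ (n + 1) ≤ ((1 + m) / 2) ^ (n + 1) * a ^ (n + 1) := by
        gcongr; exact pow_le_one_add_div_two_pow_succ hm0 hm1 hn
    _ = (a * ((1 + m) / 2)) ^ (n + 1) := by rw [mul_pow, mul_comm]
    _ ≤ I ^ (n + 1) := pow_le_pow_left₀ (by positivity) hI _
    _ ≤ m ^ n * J := hJ

section Integral

variable {α : Type*} [MeasurableSpace α] {μ : Measure α} [IsFiniteMeasure μ]

/-- Jensen's inequality for `t ↦ t ^ (n + 1)`, multiplied out so that it holds for `μ = 0` too. -/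
theorem integral_pow_succ_le_measureReal_univ_pow_mul {f : α → ℝ} (hf0 : 0 ≤ᵐ[μ] f)
    (hf : Integrable f μ) (n : ℕ) (hfn : Integrable (fun x => f x ^ (n + 1)) μ) :
    (∫ x, f x ∂μ) ^ (n + 1) ≤ μ.real univ ^ n * ∫ x, f x ^ (n + 1) ∂μ := by
  rcases eq_zero_or_neZero μ with rfl | _
  · simp
  have hm : 0 < μ.real univ := measureReal_univ_pos
  have hjensen := (convexOn_pow (n + 1)).map_average_le (continuous_pow _).continuousOn
    isClosed_Ici hf0 hf hfn
  simp only [average_eq, smul_eq_mul] at hjensen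
  rw [mul_pow, inv_pow, inv_mul_le_iff₀ (by positivity)] at hjensen
  calc (∫ x, f x ∂μ) ^ (n + 1)
      ≤ μ.real univ ^ (n + 1) * ((μ.real univ)⁻¹ * ∫ x, f x ^ (n + 1) ∂μ) := hjensen
    _ = μ.real univ ^ n * ∫ x, f x ^ (n + 1) ∂μ := by rw [pow_succ]; field_simp

theorem integral_le_setIntegral_add_mul_measureReal_compl {g : α → ℝ} (hg : Measurable g)
    (hgi : Integrable g μ) (c : ℝ) :
    ∫ x, g x ∂μ ≤ ∫ x in {x | c ≤ g x}, g x ∂μ + c * μ.real {x | c ≤ g x}ᶜ := by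
  have hs : MeasurableSet {x | c ≤ g x} := measurableSet_le measurable_const hg
  rw [← integral_add_compl hs hgi]
  gcongr
  calc ∫ x in {x | c ≤ g x}ᶜ, g x ∂μ ≤ ∫ _ in {x | c ≤ g x}ᶜ, c ∂μ :=
        setIntegral_mono_on hgi.integrableOn (integrable_const c) hs.compl
          fun x (hx : ¬c ≤ g x) => (not_le.mp hx).le
    _ = c * μ.real {x | c ≤ g x}ᶜ := by rw [setIntegral_const, smul_eq_mul, mul_comm]

end Integral

theorem concentration_step_general (lam1 pi0 : ℝ) (h2 : 2 * pi0 ≤ lam1 ^ 2)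
    (β : ℝ → ℝ) (hβ : Measurable β)
    (hL2 : (∫ x in Set.Icc (0:ℝ) 1, β x ^ 2) = lam1 ^ 2)
    (hint : ∀ n : ℕ, IntegrableOn (fun x => β x ^ (2 * n + 2)) (Set.Icc (0:ℝ) 1)) :
    ∀ n : ℕ, 1 ≤ n →
      lam1 ^ (2 * n + 2) ≤
        ∫ x in {x ∈ Set.Icc (0:ℝ) 1 | pi0 ≤ β x ^ 2}, β x ^ (2 * n + 2) := by
  intro n hn
  set μ := volume.restrict (Icc (0:ℝ) 1)
  have : IsProbabilityMeasure μ := ⟨by simp [μ, Real.volume_Icc]⟩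
  set T := {x | pi0 ≤ β x ^ 2}
  have hT : MeasurableSet T := measurableSet_le measurable_const (hβ.pow_const 2)
  have hX : {x ∈ Icc (0:ℝ) 1 | pi0 ≤ β x ^ 2} = T ∩ Icc 0 1 := inter_comm _ _
  have hpow : ∀ x, (β x ^ 2) ^ (n + 1) = β x ^ (2 * n + 2) := fun x => by ring
  have hint' : ∀ k : ℕ, Integrable (fun x => β x ^ (2 * k + 2)) μ := hint
  have hsq : Integrable (fun x => β x ^ 2) μ := by simpa using hint' 0
  have hm0 : 0 ≤ μ.real T := measureReal_nonneg
  have hm1 : μ.real T ≤ 1 := measureReal_le_one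
  have hI : lam1 ^ 2 * ((1 + μ.real T) / 2) ≤ ∫ x in T, β x ^ 2 ∂μ := by
    have := integral_le_setIntegral_add_mul_measureReal_compl (hβ.pow_const 2) hsq pi0
    rw [hL2, probReal_compl_eq_one_sub hT] at this
    nlinarith
  have hJ := integral_pow_succ_le_measureReal_univ_pow_mul (μ := μ.restrict T)
    (ae_of_all _ fun x => sq_nonneg (β x)) hsq.restrict n
    (by simpa only [hpow] using (hint' n).restrict)
  simp only [measureReal_restrict_apply_univ, hpow] at hJ
  rw [hX, ← Measure.restrict_restrict hT, show lam1 ^ (2 * n + 2) = (lam1 ^ 2) ^ (n + 1) by ring]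
  exact pow_succ_le_of_mul_one_add_div_two_le hn (sq_nonneg _) hm0 hm1 hI hJ
    (integral_nonneg fun x => hpow x ▸ pow_nonneg (sq_nonneg _) _)

/-- the concentration/convexity step: if `λ₁ ≥ p₀ > 0`,
`π₀ = p₀²/2 ≤ λ₁²/2`, `∫_{[0,1]} β² = λ₁²` and
`X₁ = {x : β(x)² ≥ π₀}`, then `∫_{X₁} β^{2n+2} ≥ λ₁^{2n+2}` for all `n ≥ 1`. -/
theorem concentration_step (p₀ lam1 pi0 : ℝ) (hp₀ : 0 < p₀) (hl : p₀ ≤ lam1)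
    (hpi : pi0 = p₀ ^ 2 / 2) (h2 : 2 * pi0 ≤ lam1 ^ 2)
    (β : ℝ → ℝ) (hβ : Measurable β)
    (hL2 : (∫ x in Set.Icc (0:ℝ) 1, β x ^ 2) = lam1 ^ 2)
    (hint : ∀ n : ℕ, IntegrableOn (fun x => β x ^ (2 * n + 2)) (Set.Icc (0:ℝ) 1)) :
    ∀ n : ℕ, 1 ≤ n →
      lam1 ^ (2 * n + 2) ≤
        ∫ x in {x ∈ Set.Icc (0:ℝ) 1 | pi0 ≤ β x ^ 2}, β x ^ (2 * n + 2) :=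
  concentration_step_general lam1 pi0 h2 β hβ hL2 hint

end
end
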